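/- arXiv:1507.06796 — 3 statements merged into one kernel-verified Lean document; each statement's English description precedes it below -/
import Mathlib

section
/- Minkowski functional of an open set: Let D be a cone carrying a compatible topology and let U ⊆ D be a proper open subset (U open, U ≠ D). Then the upper Minkowski functional φ_U : D → ℝ≥0∞ defined by φ_U(y) = ⨆ (r : ℝ≥0) (_ : 0 < r ∧ y ∈ r • U), (r : ℝ≥0∞) (with supremum 0 over the empty set) is homogeneous and lower semicontinuous, and moreover {y ∈ D | 1 < φ_U(y)} = U. -/
open scoped ENNReal NNReal Topology Pointwise

/-!
For `r > 0` we have `y ∈ r • U ↔ r⁻¹ • y ∈ U`, so `{y | c < φ_U y}` is the union of the open sets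
`s • U` over `s > c`, and homogeneity amounts to reindexing the supremum by `s ↦ r * s`.
Continuity of the rays `r ↦ r • y` for the upper topology makes `{r | r • y ∈ U}` an upward closed
set which is also open for the usual topology of `ℝ≥0`. Hence `y ∈ U` iff `t • y ∈ U` for some
`t < 1`, i.e. iff `y ∈ s • U` for some `s > 1`; and `0 ∉ U` unless `U` is everything, which is
what `φ_U 0 = 0` needs.
-/

/-- The upper topology on `ℝ≥0`: the nontrivial open sets are the
intervals `{s | a < s}`. -/
def nnrealUpperTopology : TopologicalSpace ℝ≥0 :=
  TopologicalSpace.generateFrom {S | ∃ a : ℝ≥0, S = Set.Ioi a}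

theorem nnrealUpperTopology_eq_upper : nnrealUpperTopology = Topology.upper ℝ≥0 := by
  simp only [nnrealUpperTopology, Topology.upper, Set.compl_Iic, eq_comm]

theorem isUpperSet_of_isOpen_nnrealUpperTopology {V : Set ℝ≥0}
    (hV : IsOpen[nnrealUpperTopology] V) : IsUpperSet V := by
  rw [nnrealUpperTopology_eq_upper] at hV
  let _ := Topology.upper ℝ≥0
  have : Topology.IsUpper ℝ≥0 := ⟨rfl⟩
  exact Topology.IsUpper.isUpperSet_of_isOpen hV

theorem instTopologicalSpace_le_nnrealUpperTopology :
    (inferInstance : TopologicalSpace ℝ≥0) ≤ nnrealUpperTopology :=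
  le_generateFrom fun _ ⟨_, hs⟩ => hs ▸ isOpen_Ioi

theorem exists_Ioi_subset_of_isOpen_nnrealUpperTopology {V : Set ℝ≥0}
    (hV : IsOpen[nnrealUpperTopology] V) {x : ℝ≥0} (hx : x ∈ V) (hx0 : 0 < x) :
    ∃ a < x, Set.Ioi a ⊆ V := by
  have hVnhds : V ∈ 𝓝 x := (instTopologicalSpace_le_nnrealUpperTopology V hV).mem_nhds hx
  obtain ⟨a, hax, hIoc⟩ := exists_Ioc_subset_of_mem_nhds hVnhds ⟨0, hx0⟩
  refine ⟨a, hax, fun y hy => ?_⟩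
  rcases le_total y x with hyx | hxy
  · exact hIoc ⟨hy, hyx⟩
  · exact isUpperSet_of_isOpen_nnrealUpperTopology hV hxy hx

section Cone

variable {D : Type*} [AddCommMonoid D] [Module ℝ≥0 D]

noncomputable def upperMinkowski (U : Set D) (y : D) : ℝ≥0∞ :=
  ⨆ (r : ℝ≥0) (_ : 0 < r ∧ y ∈ r • U), (r : ℝ≥0∞)

theorem le_upperMinkowski {U : Set D} {y : D} {s : ℝ≥0} (hs : 0 < s) (hy : y ∈ s • U) :
    (s : ℝ≥0∞) ≤ upperMinkowski U y :=
  le_iSup₂ (f := fun (r : ℝ≥0) (_ : 0 < r ∧ y ∈ r • U) => (r : ℝ≥0∞)) s ⟨hs, hy⟩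

theorem lt_upperMinkowski_iff {U : Set D} {y : D} {c : ℝ≥0} :
    (c : ℝ≥0∞) < upperMinkowski U y ↔ ∃ s : ℝ≥0, c < s ∧ y ∈ s • U := by
  constructor
  · intro hc
    obtain ⟨s, hs⟩ := lt_iSup_iff.mp hc
    obtain ⟨⟨-, hy⟩, hcs⟩ := lt_iSup_iff.mp hs
    exact ⟨s, ENNReal.coe_lt_coe.mp hcs, hy⟩
  · rintro ⟨s, hcs, hy⟩
    exact (ENNReal.coe_lt_coe.mpr hcs).trans_le (le_upperMinkowski (pos_of_gt hcs) hy)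

theorem upperMinkowski_zero {U : Set D} (hU : (0 : D) ∉ U) : upperMinkowski U 0 = 0 := by
  refine nonpos_iff_eq_zero.mp (iSup₂_le fun r ⟨hr, h0⟩ => absurd h0 ?_)
  rwa [Set.zero_mem_smul_set_iff hr.ne']

theorem upperMinkowski_smul_le {U : Set D} {r : ℝ≥0} (hr : 0 < r) (a : D) :
    upperMinkowski U (r • a) ≤ r * upperMinkowski U a := by
  refine iSup₂_le fun s ⟨hs, hra⟩ => ?_
  have ha : a ∈ (r⁻¹ * s) • U := by
    rwa [mul_smul, ← Set.smul_mem_smul_set_iff₀ hr.ne', smul_inv_smul₀ hr.ne']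
  calc (s : ℝ≥0∞) = r * (r⁻¹ * s : ℝ≥0) := by
        rw [← ENNReal.coe_mul, mul_inv_cancel_left₀ hr.ne']
    _ ≤ r * upperMinkowski U a := by gcongr; exact le_upperMinkowski (by positivity) ha

theorem upperMinkowski_smul {U : Set D} (hU : (0 : D) ∉ U) (r : ℝ≥0) (a : D) :
    upperMinkowski U (r • a) = r * upperMinkowski U a := by
  rcases eq_zero_or_pos r with rfl | hr
  · simp [upperMinkowski_zero hU]
  refine (upperMinkowski_smul_le hr a).antisymm ?_
  calc (r : ℝ≥0∞) * upperMinkowski U a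
      = r * upperMinkowski U (r⁻¹ • r • a) := by rw [inv_smul_smul₀ hr.ne']
    _ ≤ r * (r⁻¹ * upperMinkowski U (r • a)) := by
        gcongr; exact upperMinkowski_smul_le (inv_pos.mpr hr) _
    _ = upperMinkowski U (r • a) := by
        rw [← mul_assoc, ← ENNReal.coe_mul, mul_inv_cancel₀ hr.ne', ENNReal.coe_one, one_mul]

theorem isOpen_lt_upperMinkowski [TopologicalSpace D] [ContinuousConstSMul ℝ≥0 D]
    {U : Set D} (hU : IsOpen U) (c : ℝ≥0) : IsOpen {y | (c : ℝ≥0∞) < upperMinkowski U y} := by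
  have : {y | (c : ℝ≥0∞) < upperMinkowski U y} = ⋃ (s : ℝ≥0) (_ : c < s), s • U := by
    ext y
    simp only [Set.mem_ofPred_eq, Set.mem_iUnion, lt_upperMinkowski_iff, exists_prop]
  rw [this]
  exact isOpen_biUnion fun s hcs => hU.smul₀ (pos_of_gt hcs).ne'

variable [TopologicalSpace D]

theorem isOpen_nnrealUpperTopology_setOf_smul_mem {y : D}
    (hray : Continuous[nnrealUpperTopology, _] fun r : ℝ≥0 => r • y)
    {U : Set D} (hU : IsOpen U) : IsOpen[nnrealUpperTopology] {r : ℝ≥0 | r • y ∈ U} :=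
  (@continuous_def _ _ nnrealUpperTopology _ _).mp hray U hU

theorem zero_notMem_of_isOpen_of_ne_univ
    (hray : ∀ y : D, Continuous[nnrealUpperTopology, _] fun r : ℝ≥0 => r • y)
    {U : Set D} (hU : IsOpen U) (hne : U ≠ Set.univ) : (0 : D) ∉ U := by
  intro h0
  refine hne (Set.eq_univ_of_forall fun y => ?_)
  have hV := isUpperSet_of_isOpen_nnrealUpperTopology
    (isOpen_nnrealUpperTopology_setOf_smul_mem (hray y) hU)
  simpa using hV zero_le_one (by simpa using h0)

theorem one_lt_upperMinkowski_iff {y : D}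
    (hray : Continuous[nnrealUpperTopology, _] fun r : ℝ≥0 => r • y)
    {U : Set D} (hU : IsOpen U) : 1 < upperMinkowski U y ↔ y ∈ U := by
  have hV := isOpen_nnrealUpperTopology_setOf_smul_mem hray hU
  rw [← ENNReal.coe_one, lt_upperMinkowski_iff]
  constructor
  · rintro ⟨s, h1s, hys⟩
    have hs : s⁻¹ • y ∈ U :=
      (Set.mem_smul_set_iff_inv_smul_mem₀ (one_pos.trans h1s).ne' _ _).mp hys
    simpa using isUpperSet_of_isOpen_nnrealUpperTopology hV (inv_le_one_of_one_le₀ h1s.le) hs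
  · intro hy
    obtain ⟨a, ha1, haV⟩ :=
      exists_Ioi_subset_of_isOpen_nnrealUpperTopology hV (by simpa using hy) one_pos
    obtain ⟨t, hat, ht1⟩ := exists_between ha1
    have ht : 0 < t := pos_of_gt hat
    refine ⟨t⁻¹, (one_lt_inv₀ ht).mpr ht1, ?_⟩
    rw [Set.mem_smul_set_iff_inv_smul_mem₀ (inv_ne_zero ht.ne'), inv_inv]
    exact haV hat

end Cone

theorem minkowski_functional_of_open_general {D : Type*} [AddCommMonoid D] [Module ℝ≥0 D]
    [TopologicalSpace D]
    (hhomothety : ∀ r : ℝ≥0, Continuous fun y : D => r • y)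
    (hray : ∀ y : D, Continuous[nnrealUpperTopology, _] fun r : ℝ≥0 => r • y)
    (U : Set D) (hU : IsOpen U) (hUproper : U ≠ Set.univ)
    (φ : D → ℝ≥0∞)
    (hφ : ∀ y : D, φ y = ⨆ (r : ℝ≥0) (_ : 0 < r ∧ y ∈ r • U), (r : ℝ≥0∞)) :
    (∀ (r : ℝ≥0) (a : D), φ (r • a) = (r : ℝ≥0∞) * φ a) ∧
    (∀ r : ℝ≥0, IsOpen {x : D | (r : ℝ≥0∞) < φ x}) ∧
    {y : D | 1 < φ y} = U := by
  have : ContinuousConstSMul ℝ≥0 D := ⟨hhomothety⟩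
  obtain rfl : φ = upperMinkowski U := funext hφ
  exact ⟨upperMinkowski_smul (zero_notMem_of_isOpen_of_ne_univ hray hU hUproper),
    isOpen_lt_upperMinkowski hU, Set.ext fun y => one_lt_upperMinkowski_iff (hray y) hU⟩

/-- The upper Minkowski functional of a proper open subset `U` of a cone `D`
with a compatible topology is homogeneous, lower semicontinuous, and its
set `{y | 1 < φ_U y}` is `U` itself. -/
theorem minkowski_functional_of_open {D : Type*} [AddCommMonoid D] [Module ℝ≥0 D]
    [TopologicalSpace D]
    (htrans : ∀ a : D, Continuous fun y : D => a + y)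
    (hhomothety : ∀ r : ℝ≥0, Continuous fun y : D => r • y)
    (hray : ∀ y : D, Continuous[nnrealUpperTopology, _] fun r : ℝ≥0 => r • y)
    (U : Set D) (hU : IsOpen U) (hUproper : U ≠ Set.univ)
    (φ : D → ℝ≥0∞)
    (hφ : ∀ y : D, φ y = ⨆ (r : ℝ≥0) (_ : 0 < r ∧ y ∈ r • U), (r : ℝ≥0∞)) :
    (∀ (r : ℝ≥0) (a : D), φ (r • a) = (r : ℝ≥0∞) * φ a) ∧
    (∀ r : ℝ≥0, IsOpen {x : D | (r : ℝ≥0∞) < φ x}) ∧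
    {y : D | 1 < φ y} = U :=
  minkowski_functional_of_open_general hhomothety hray U hU hUproper φ hφ
end

section
/- Main theorem: Let C, D be cones together with a non-singular bilinear map B : C → D → ℝ≥0∞, and equip D with the weak upper topology w(D,C). Then every sublinear functional ψ : D → ℝ≥0∞ that is lower semicontinuous for w(D,C) is the pointwise supremum of the evaluation functionals below it: for every y ∈ D, ψ(y) = ⨆ (x : C) (_ : ∀ z, B x z ≤ ψ(z)), B x y. -/
open scoped ENNReal NNReal Topology

/-!
Fix `y` and `c < ψ y`, and pick `r` with `c < r < ψ y`. Since `{ψ > r}` is `w(D,C)`-open, there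
are finitely many `x_i ∈ C`, `s_i < B x_i y` such that `B x_i z > s_i` for all `i` forces
`ψ z > r`. Hence the point `((B x_i y)_i, c)` of `ℝⁿ × ℝ` lies outside the closure of the
convex cone of all `(a, b)` with `a_i ≤ B x_i z` and `ψ z ≤ b` for some `z`. A separating
functional (Farkas) has nonnegative coefficients `λ_i, γ`, and after rescaling
`x = ∑ μ_i x_i` satisfies `B x ≤ ψ` and `c ≤ B x y`.
-/

abbrev weakUpperTopology {C D : Type*} (B : C → D → ℝ≥0∞) : TopologicalSpace D :=
  TopologicalSpace.generateFrom {S | ∃ (x : C) (s : ℝ≥0), S = {y : D | (s : ℝ≥0∞) < B x y}}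

theorem exists_finset_of_isOpen_weakUpperTopology {C D : Type*} {B : C → D → ℝ≥0∞} {U : Set D}
    (hU : IsOpen[weakUpperTopology B] U) {y : D} (hy : y ∈ U) :
    ∃ t : Finset (C × ℝ≥0), (∀ p ∈ t, (p.2 : ℝ≥0∞) < B p.1 y) ∧
      ∀ z, (∀ p ∈ t, (p.2 : ℝ≥0∞) < B p.1 z) → z ∈ U := by
  classical
  let := weakUpperTopology B
  obtain ⟨_, ⟨F, ⟨hF, hFsub⟩, rfl⟩, hyF, hFU⟩ :=
    (TopologicalSpace.isTopologicalBasis_of_subbasis rfl).exists_subset_of_mem_open hy hU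
  obtain ⟨F, rfl⟩ := hF.exists_finset_coe
  have hF_image :
      (F : Set (Set D)) ⊆ (fun p : C × ℝ≥0 => {z | (p.2 : ℝ≥0∞) < B p.1 z}) '' .univ := by
    rintro S hS
    obtain ⟨x, s, rfl⟩ := hFsub hS
    exact ⟨(x, s), trivial, rfl⟩
  obtain ⟨t, -, rfl⟩ := Finset.subset_set_image_iff.mp hF_image
  refine ⟨t, fun p hp => hyF _ (Finset.mem_image_of_mem _ hp), fun z hz => hFU ?_⟩
  simpa using hz

theorem ENNReal.sum_mul_le_of_forall_nnreal_le {ι : Type*} [Fintype ι] (μ x : ι → ℝ≥0∞)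
    {b : ℝ≥0∞} (h : ∀ a : ι → ℝ≥0, (∀ i, (a i : ℝ≥0∞) ≤ x i) → ∑ i, μ i * a i ≤ b) :
    ∑ i, μ i * x i ≤ b := by
  have htrunc : ∀ i, μ i * x i = ⨆ M : ℕ, μ i * min (x i) M := fun i => by
    rw [← ENNReal.mul_iSup, ← inf_iSup_eq, ENNReal.iSup_natCast, inf_top_eq]
  rw [Finset.sum_congr rfl fun i _ => htrunc i,
    ENNReal.finsetSum_iSup_of_monotone fun i M M' hM => by gcongr]
  refine iSup_le fun M => ?_
  have hfin : ∀ i, min (x i) M ≠ ∞ := fun i =>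
    ne_top_of_le_ne_top (ENNReal.natCast_ne_top M) (min_le_right _ _)
  simpa only [ENNReal.coe_toNNReal (hfin _)] using
    h (fun i => (min (x i) M).toNNReal) fun i => by
      simp only [ENNReal.coe_toNNReal (hfin i), min_le_left]

section EpigraphCone

variable {ι D : Type*} [AddCommMonoid D] [Module ℝ≥0 D]

/-- Going through `ENNReal.ofReal` lets the cone live in `ℝⁿ × ℝ` although `f i z` may be `∞`:
negative coordinates and infinite values impose no constraint. -/
def epigraphCone (f : ι → D →ₗ[ℝ≥0] ℝ≥0∞) (ψ : D → ℝ≥0∞)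
    (hψ_smul : ∀ (r : ℝ≥0) (a : D), ψ (r • a) = r * ψ a)
    (hψ_add : ∀ a b : D, ψ (a + b) ≤ ψ a + ψ b) : PointedCone ℝ ((ι → ℝ) × ℝ) where
  carrier := {q | 0 ≤ q.2 ∧ ∃ z, (∀ i, ENNReal.ofReal (q.1 i) ≤ f i z) ∧ ψ z ≤ ENNReal.ofReal q.2}
  zero_mem' := ⟨le_rfl, 0, fun i => by simp, by simpa using hψ_smul 0 0⟩
  add_mem' := by
    rintro ⟨a, b⟩ ⟨a', b'⟩ ⟨hb, z, hfz, hψz⟩ ⟨hb', z', hfz', hψz'⟩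
    refine ⟨add_nonneg hb hb', z + z', fun i => ?_, ?_⟩
    · calc ENNReal.ofReal (a i + a' i) ≤ ENNReal.ofReal (a i) + ENNReal.ofReal (a' i) :=
            ENNReal.ofReal_add_le
        _ ≤ f i (z + z') := by rw [map_add]; gcongr <;> simp_all
    · calc ψ (z + z') ≤ ψ z + ψ z' := hψ_add z z'
        _ ≤ ENNReal.ofReal (b + b') := by rw [ENNReal.ofReal_add hb hb']; gcongr
  smul_mem' := by
    rintro ⟨c, hc⟩ ⟨a, b⟩ ⟨hb, z, hfz, hψz⟩
    refine ⟨mul_nonneg hc hb, c.toNNReal • z, fun i => ?_, ?_⟩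
    · show ENNReal.ofReal (c * a i) ≤ f i (c.toNNReal • z)
      rw [map_smul, ENNReal.smul_def, smul_eq_mul, ENNReal.ofReal_mul hc]
      exact mul_le_mul_right (hfz i) _
    · show ψ (c.toNNReal • z) ≤ ENNReal.ofReal (c * b)
      rw [hψ_smul, ENNReal.ofReal_mul hc]
      exact mul_le_mul_right hψz _

theorem notMem_closure_epigraphCone [Finite ι] {f : ι → D →ₗ[ℝ≥0] ℝ≥0∞} {ψ : D → ℝ≥0∞}
    (hψ_smul : ∀ (r : ℝ≥0) (a : D), ψ (r • a) = r * ψ a)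
    (hψ_add : ∀ a b : D, ψ (a + b) ≤ ψ a + ψ b) {s : ι → ℝ≥0} {r : ℝ≥0}
    (H : ∀ z, (∀ i, (s i : ℝ≥0∞) < f i z) → (r : ℝ≥0∞) < ψ z) {a : ι → ℝ} {b : ℝ}
    (ha : ∀ i, (s i : ℝ) < a i) (hb : b < r) :
    (a, b) ∉ closure (epigraphCone f ψ hψ_smul hψ_add : Set ((ι → ℝ) × ℝ)) := by
  set U := {q : (ι → ℝ) × ℝ | (∀ i, (s i : ℝ) < q.1 i) ∧ q.2 < r}
  have hU : IsOpen U := by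
    simp only [U, Set.ofPred_and, Set.ofPred_forall]
    exact (isOpen_iInter_of_finite fun i => isOpen_lt continuous_const (by fun_prop)).inter
      (isOpen_lt continuous_snd continuous_const)
  have hUK : Disjoint U (epigraphCone f ψ hψ_smul hψ_add) := by
    refine Set.disjoint_left.mpr ?_
    rintro ⟨a, b⟩ ⟨ha, hb⟩ ⟨hb0, z, hfz, hψz⟩
    have hrψ := H z fun i => (ENNReal.coe_lt_ofReal.mpr (ha i)).trans_le (hfz i)
    exact (hrψ.trans_le hψz).not_gt ((ENNReal.ofReal_lt_coe_iff hb0).mpr hb)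
  exact Set.disjoint_left.mp (hUK.closure_right hU) ⟨ha, hb⟩

theorem exists_nonneg_coeffs_separating_epigraphCone [Fintype ι] {f : ι → D →ₗ[ℝ≥0] ℝ≥0∞}
    {ψ : D → ℝ≥0∞} (hψ_smul : ∀ (r : ℝ≥0) (a : D), ψ (r • a) = r * ψ a)
    (hψ_add : ∀ a b : D, ψ (a + b) ≤ ψ a + ψ b) {a₀ : ι → ℝ} {b₀ : ℝ}
    (hp : (a₀, b₀) ∉ closure (epigraphCone f ψ hψ_smul hψ_add : Set ((ι → ℝ) × ℝ))) :
    ∃ (lam : ι → ℝ) (γ : ℝ), (∀ i, 0 ≤ lam i) ∧ 0 ≤ γ ∧ γ * b₀ < ∑ i, lam i * a₀ i ∧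
      ∀ q ∈ epigraphCone f ψ hψ_smul hψ_add, ∑ i, lam i * q.1 i ≤ γ * q.2 := by
  classical
  have hψ0 : ψ 0 = 0 := by simpa using hψ_smul 0 0
  set K := epigraphCone f ψ hψ_smul hψ_add
  obtain ⟨g, hgK, hgp⟩ := ProperCone.hyperplane_separation_point (Submodule.closure K) hp
  have hgK : ∀ q ∈ K, 0 ≤ g q := fun q hq => hgK q (subset_closure hq)
  set lam : ι → ℝ := fun i => -g (fun j => if i = j then 1 else 0, 0)
  set γ : ℝ := g (0, 1)
  have hg : ∀ a b, g (a, b) = γ * b - ∑ i, lam i * a i := by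
    intro a b
    have hinl := LinearMap.pi_apply_eq_sum_univ ((g : _ →ₗ[ℝ] ℝ).comp (LinearMap.inl ℝ _ ℝ)) a
    have hb : g (0, b) = b * γ := by simpa using g.map_smul b (0, 1)
    simp only [LinearMap.comp_apply, LinearMap.inl_apply, ContinuousLinearMap.coe_coe] at hinl
    rw [← add_zero a, ← zero_add b, ← Prod.mk_add_mk, map_add, hinl, hb]
    simp [lam, mul_comm, add_comm]
  refine ⟨lam, γ, fun i => ?_, hgK _ ⟨zero_le_one, 0, by simp, by simp [hψ0]⟩,
    by linarith [hg a₀ b₀], fun q hq => by linarith [hg q.1 q.2, hgK q hq]⟩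
  have hmem : (fun j => -(if i = j then 1 else 0), 0) ∈ K :=
    ⟨le_rfl, 0, fun j => by simp only [map_zero]; split_ifs <;> simp, by simp [hψ0]⟩
  simpa [hg] using hgK _ hmem

theorem exists_mem_span_le_of_forall_lt [Fintype ι] {f : ι → D →ₗ[ℝ≥0] ℝ≥0∞} {ψ : D → ℝ≥0∞}
    (hψ_smul : ∀ (r : ℝ≥0) (a : D), ψ (r • a) = r * ψ a)
    (hψ_add : ∀ a b : D, ψ (a + b) ≤ ψ a + ψ b) {s : ι → ℝ≥0} {r c : ℝ≥0} (hcr : c < r)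
    {y : D} (hy : ∀ i, (s i : ℝ≥0∞) < f i y)
    (H : ∀ z, (∀ i, (s i : ℝ≥0∞) < f i z) → (r : ℝ≥0∞) < ψ z) :
    ∃ φ ∈ Submodule.span ℝ≥0 (Set.range f), (∀ z, φ z ≤ ψ z) ∧ (c : ℝ≥0∞) ≤ φ y := by
  choose s' hss' hs'y using fun i => ENNReal.lt_iff_exists_nnreal_btwn.mp (hy i)
  obtain ⟨lam, γ, hlam, hγ, hsep, hK⟩ := exists_nonneg_coeffs_separating_epigraphCone hψ_smul hψ_add
    (notMem_closure_epigraphCone hψ_smul hψ_add H (a := fun i => s' i)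
      (fun i => by exact_mod_cast hss' i) (b := c) (by exact_mod_cast hcr))
  set S := ∑ i, lam i * s' i
  have hS : 0 < S := lt_of_le_of_lt (by positivity) hsep
  set t := (c : ℝ) / S
  have ht : 0 ≤ t := by positivity
  have htγ : t * γ ≤ 1 := by
    rw [div_mul_eq_mul_div, div_le_one hS]
    linarith
  set μ : ι → ℝ≥0 := fun i => (t * lam i).toNNReal
  have hφ : ∀ z, (∑ i, μ i • f i) z = ∑ i, (μ i : ℝ≥0∞) * f i z := fun z => by
    simp [ENNReal.smul_def]
  have hμ : ∀ a : ι → ℝ≥0, ∑ i, (μ i : ℝ≥0∞) * a i = ENNReal.ofReal (t * ∑ i, lam i * a i) := by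
    intro a
    rw [Finset.mul_sum, ENNReal.ofReal_sum_of_nonneg fun i _ => by have := hlam i; positivity]
    refine Finset.sum_congr rfl fun i _ => ?_
    rw [← mul_assoc, ENNReal.ofReal_mul (mul_nonneg ht (hlam i)), ENNReal.ofReal_coe_nnreal]
    rfl
  refine ⟨∑ i, μ i • f i,
    Submodule.sum_mem _ fun i _ => Submodule.smul_mem _ _ (Submodule.subset_span ⟨i, rfl⟩),
    fun z => ?_, ?_⟩
  · rcases eq_or_ne (ψ z) ∞ with hz | hz
    · simp [hz]
    rw [hφ]
    refine ENNReal.sum_mul_le_of_forall_nnreal_le _ _ fun a ha => ?_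
    have hmem : (fun i => (a i : ℝ), (ψ z).toReal) ∈ epigraphCone f ψ hψ_smul hψ_add :=
      ⟨ENNReal.toReal_nonneg, z, by simpa using ha, by simp [hz]⟩
    rw [hμ, ← ENNReal.ofReal_toReal hz]
    refine ENNReal.ofReal_le_ofReal ?_
    calc t * ∑ i, lam i * a i ≤ t * (γ * (ψ z).toReal) := by gcongr; exact hK _ hmem
      _ = (t * γ) * (ψ z).toReal := by ring
      _ ≤ (ψ z).toReal := mul_le_of_le_one_left ENNReal.toReal_nonneg htγ
  · rw [hφ]
    calc (c : ℝ≥0∞) = ENNReal.ofReal (t * S) := by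
          rw [div_mul_cancel₀ _ hS.ne', ENNReal.ofReal_coe_nnreal]
      _ = ∑ i, (μ i : ℝ≥0∞) * s' i := (hμ s').symm
      _ ≤ ∑ i, (μ i : ℝ≥0∞) * f i y := by gcongr with i; exact (hs'y i).le

end EpigraphCone

theorem sublinear_lsc_eq_sup_evaluations_general
    {C D : Type*} [AddCommMonoid C] [Module ℝ≥0 C] [AddCommMonoid D] [Module ℝ≥0 D]
    (B : C → D → ℝ≥0∞)
    (hB_addl : ∀ x x' : C, ∀ y : D, B (x + x') y = B x y + B x' y)
    (hB_smull : ∀ (r : ℝ≥0) (x : C) (y : D), B (r • x) y = (r : ℝ≥0∞) * B x y)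
    (hB_addr : ∀ (x : C) (y y' : D), B x (y + y') = B x y + B x y')
    (hB_smulr : ∀ (r : ℝ≥0) (x : C) (y : D), B x (r • y) = (r : ℝ≥0∞) * B x y)
    (ψ : D → ℝ≥0∞)
    (hψ_hom : ∀ (r : ℝ≥0) (a : D), ψ (r • a) = (r : ℝ≥0∞) * ψ a)
    (hψ_subadd : ∀ a b : D, ψ (a + b) ≤ ψ a + ψ b)
    (hψ_lsc : ∀ r : ℝ≥0,
      IsOpen[TopologicalSpace.generateFrom
        {S | ∃ (x : C) (s : ℝ≥0), S = {y : D | (s : ℝ≥0∞) < B x y}}]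
        {y : D | (r : ℝ≥0∞) < ψ y}) :
    ∀ y : D, ψ y = ⨆ (x : C) (_ : ∀ z : D, B x z ≤ ψ z), B x y := by
  intro y
  refine le_antisymm (ENNReal.le_of_forall_nnreal_lt fun c hc => ?_) (iSup₂_le fun x hx => hx y)
  obtain ⟨r, hcr, hrψ⟩ := ENNReal.lt_iff_exists_nnreal_btwn.mp hc
  let Bₗ : C →ₗ[ℝ≥0] D →ₗ[ℝ≥0] ℝ≥0∞ := LinearMap.mk₂ ℝ≥0 B hB_addl
    (by simpa [ENNReal.smul_def] using hB_smull) hB_addr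
    (by simpa [ENNReal.smul_def] using hB_smulr)
  obtain ⟨t, hty, htψ⟩ := exists_finset_of_isOpen_weakUpperTopology (hψ_lsc r) hrψ
  obtain ⟨φ, hφ_span, hφψ, hcφ⟩ := exists_mem_span_le_of_forall_lt (f := fun p : t => Bₗ p.1.1)
    hψ_hom hψ_subadd (s := fun p => p.1.2) (by exact_mod_cast hcr) (fun p => hty p p.2)
    fun z hz => htψ z fun p hp => hz ⟨p, hp⟩
  have hspan : Submodule.span ℝ≥0 (Set.range fun p : t => Bₗ p.1.1) ≤ LinearMap.range Bₗ :=
    Submodule.span_le.mpr (Set.range_subset_iff.mpr fun p => LinearMap.mem_range_self Bₗ p.1.1)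
  obtain ⟨x, rfl⟩ := hspan hφ_span
  exact hcφ.trans (le_iSup₂_of_le x hφψ le_rfl)

/-- Main theorem: for a dual pair of cones `C, D` with a non-singular bilinear
map `B : C → D → ℝ≥0∞`, every sublinear functional `ψ : D → ℝ≥0∞` which is
lower semicontinuous for the weak upper topology `w(D,C)` is the pointwise sup
of the evaluation functionals `B x` lying below it. -/
theorem sublinear_lsc_eq_sup_evaluations
    {C D : Type*} [AddCommMonoid C] [Module ℝ≥0 C] [AddCommMonoid D] [Module ℝ≥0 D]
    (B : C → D → ℝ≥0∞)
    (hB_addl : ∀ x x' : C, ∀ y : D, B (x + x') y = B x y + B x' y)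
    (hB_smull : ∀ (r : ℝ≥0) (x : C) (y : D), B (r • x) y = (r : ℝ≥0∞) * B x y)
    (hB_addr : ∀ (x : C) (y y' : D), B x (y + y') = B x y + B x y')
    (hB_smulr : ∀ (r : ℝ≥0) (x : C) (y : D), B x (r • y) = (r : ℝ≥0∞) * B x y)
    (hB_nonsing : ∀ y y' : D, y ≠ y' → ∃ x : C, B x y ≠ B x y')
    (ψ : D → ℝ≥0∞)
    (hψ_hom : ∀ (r : ℝ≥0) (a : D), ψ (r • a) = (r : ℝ≥0∞) * ψ a)
    (hψ_subadd : ∀ a b : D, ψ (a + b) ≤ ψ a + ψ b)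
    (hψ_lsc : ∀ r : ℝ≥0,
      IsOpen[TopologicalSpace.generateFrom
        {S | ∃ (x : C) (s : ℝ≥0), S = {y : D | (s : ℝ≥0∞) < B x y}}]
        {y : D | (r : ℝ≥0∞) < ψ y}) :
    ∀ y : D, ψ y = ⨆ (x : C) (_ : ∀ z : D, B x z ≤ ψ z), B x y :=
  sublinear_lsc_eq_sup_evaluations_general B hB_addl hB_smull hB_addr hB_smulr ψ hψ_hom hψ_subadd
    hψ_lsc
end

section
/- Let C, D be cones, where C additionally carries a partial order in which every nonempty directed subset has a least upper bound, and let B : C → D → ℝ≥0∞ be a bilinear map that is Scott-continuous in its first argument: whenever T ⊆ C is nonempty and directed and IsLUB T c, then B c y = ⨆ x ∈ T, B x y for every y ∈ D. Let C₀ ⊆ C be a d-dense subcone, i.e. C₀ is closed under addition and ℝ≥0-scalar multiplication, and the only subset S of C with C₀ ⊆ S that is closed under addition, under ℝ≥0-scalar multiplication, and under least upper bounds of its nonempty directed subsets is S = C itself. Then the weak upper topology w(D,C₀) (generated by {y | (r:ℝ≥0∞) < B x y}, x ∈ C₀, r : ℝ≥0) agrees with the weak upper topology w(D,C) (generated by the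 same sets for all x ∈ C). -/
/-! `w(D, C₀)` and `w(D, C)` are the coarsest topologies making `B x` lower semicontinuous for
`x ∈ C₀`, resp. `x ∈ C`. The set of `x` for which `B x` is lower semicontinuous in `w(D, C₀)`
contains `C₀` and is closed under sums, scalar multiples and directed suprema
(by Scott continuity of `B`), so by d-density it is all of `C`. -/

open scoped ENNReal NNReal
open Set TopologicalSpace

theorem ENNReal.lowerSemicontinuous_iff_isOpen_coe_lt {X : Type*} [TopologicalSpace X]
    {f : X → ℝ≥0∞} : LowerSemicontinuous f ↔ ∀ r : ℝ≥0, IsOpen {x | (r : ℝ≥0∞) < f x} := by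
  refine lowerSemicontinuous_iff_isOpen_preimage.trans ⟨fun h r => h r, fun h a => ?_⟩
  induction a using ENNReal.recTopCoe with
  | top => simp
  | coe r => exact h r

theorem LowerSemicontinuous.const_mul_ennreal {X : Type*} [TopologicalSpace X]
    {f : X → ℝ≥0∞} (hf : LowerSemicontinuous f) (r : ℝ≥0) :
    LowerSemicontinuous fun x => (r : ℝ≥0∞) * f x :=
  (ENNReal.continuous_const_mul ENNReal.coe_ne_top).comp_lowerSemicontinuous hf
    fun _ _ hab => mul_le_mul_right hab _

theorem weakUpperTopology_d_dense_general
    {C D : Type*} [AddCommMonoid C] [Module ℝ≥0 C] [PartialOrder C]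
    [AddCommMonoid D] [Module ℝ≥0 D]
    (B : C → D → ℝ≥0∞)
    (hB_addl : ∀ x x' : C, ∀ y : D, B (x + x') y = B x y + B x' y)
    (hB_smull : ∀ (r : ℝ≥0) (x : C) (y : D), B (r • x) y = (r : ℝ≥0∞) * B x y)
    (hB_scott : ∀ (T : Set C) (c : C) (y : D), T.Nonempty → DirectedOn (· ≤ ·) T →
      IsLUB T c → B c y = ⨆ x ∈ T, B x y)
    (C₀ : Set C)
    (hC₀_dense : ∀ S : Set C, C₀ ⊆ S →
      (∀ x ∈ S, ∀ x' ∈ S, x + x' ∈ S) →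
      (∀ (r : ℝ≥0), ∀ x ∈ S, r • x ∈ S) →
      (∀ T ⊆ S, T.Nonempty → DirectedOn (· ≤ ·) T → ∀ c : C, IsLUB T c → c ∈ S) →
      S = Set.univ) :
    TopologicalSpace.generateFrom
        {S | ∃ x ∈ C₀, ∃ r : ℝ≥0, S = {y : D | (r : ℝ≥0∞) < B x y}}
      = TopologicalSpace.generateFrom
        {S | ∃ (x : C) (r : ℝ≥0), S = {y : D | (r : ℝ≥0∞) < B x y}} := by
  refine le_antisymm (le_generateFrom ?_) (generateFrom_anti ?_)
  · rintro _ ⟨x, r, rfl⟩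
    let _ : TopologicalSpace D :=
      generateFrom {S | ∃ x ∈ C₀, ∃ r : ℝ≥0, S = {y : D | (r : ℝ≥0∞) < B x y}}
    have hlsc : {x | LowerSemicontinuous (B x)} = univ := by
      refine hC₀_dense _ (fun x hx => ?_) (fun x hx x' hx' => ?_) (fun r x hx => ?_)
        (fun T hT hne hdir c hc => ?_)
      · exact ENNReal.lowerSemicontinuous_iff_isOpen_coe_lt.2 fun r =>
          isOpen_generateFrom_of_mem ⟨x, hx, r, rfl⟩
      · simpa only [mem_ofPred_eq, funext (hB_addl x x')] using
          LowerSemicontinuous.add hx hx'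
      · simpa only [mem_ofPred_eq, funext (hB_smull r x)] using hx.const_mul_ennreal r
      · simpa only [mem_ofPred_eq, funext fun y => hB_scott T c y hne hdir hc] using
          lowerSemicontinuous_biSup (f := fun x _ => B x) fun x hx => hT hx
    have hx : x ∈ {x | LowerSemicontinuous (B x)} := hlsc ▸ mem_univ x
    exact ENNReal.lowerSemicontinuous_iff_isOpen_coe_lt.1 hx r
  · rintro _ ⟨x, -, r, rfl⟩
    exact ⟨x, r, rfl⟩

/-- For a dual pair of cones `C, D` where `C` is directed complete and the
bilinear map `B` is Scott-continuous in its first argument, the weak upper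
topology `w(D, C₀)` determined by a d-dense subcone `C₀ ⊆ C` agrees with the
weak upper topology `w(D, C)`. -/
theorem weakUpperTopology_d_dense
    {C D : Type*} [AddCommMonoid C] [Module ℝ≥0 C] [PartialOrder C]
    [AddCommMonoid D] [Module ℝ≥0 D]
    (hdcpo : ∀ T : Set C, T.Nonempty → DirectedOn (· ≤ ·) T → ∃ c : C, IsLUB T c)
    (B : C → D → ℝ≥0∞)
    (hB_addl : ∀ x x' : C, ∀ y : D, B (x + x') y = B x y + B x' y)
    (hB_smull : ∀ (r : ℝ≥0) (x : C) (y : D), B (r • x) y = (r : ℝ≥0∞) * B x y)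
    (hB_addr : ∀ (x : C) (y y' : D), B x (y + y') = B x y + B x y')
    (hB_smulr : ∀ (r : ℝ≥0) (x : C) (y : D), B x (r • y) = (r : ℝ≥0∞) * B x y)
    (hB_scott : ∀ (T : Set C) (c : C) (y : D), T.Nonempty → DirectedOn (· ≤ ·) T →
      IsLUB T c → B c y = ⨆ x ∈ T, B x y)
    (C₀ : Set C)
    (hC₀_add : ∀ x ∈ C₀, ∀ x' ∈ C₀, x + x' ∈ C₀)
    (hC₀_smul : ∀ (r : ℝ≥0), ∀ x ∈ C₀, r • x ∈ C₀)
    (hC₀_dense : ∀ S : Set C, C₀ ⊆ S →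
      (∀ x ∈ S, ∀ x' ∈ S, x + x' ∈ S) →
      (∀ (r : ℝ≥0), ∀ x ∈ S, r • x ∈ S) →
      (∀ T ⊆ S, T.Nonempty → DirectedOn (· ≤ ·) T → ∀ c : C, IsLUB T c → c ∈ S) →
      S = Set.univ) :
    TopologicalSpace.generateFrom
        {S | ∃ x ∈ C₀, ∃ r : ℝ≥0, S = {y : D | (r : ℝ≥0∞) < B x y}}
      = TopologicalSpace.generateFrom
        {S | ∃ (x : C) (r : ℝ≥0), S = {y : D | (r : ℝ≥0∞) < B x y}} :=
  weakUpperTopology_d_dense_general B hB_addl hB_smull hB_scott C₀ hC₀_dense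
end
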